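/- arXiv:1301.1260 — 2 statements merged into one kernel-verified Lean document; each statement's English description precedes it below -/
import Mathlib

section
/- Let a₋, s, q, B, D, k, φ₋ be real numbers with B, D, k, s, φ₋ > 0 and a₋ > s. Then the 3×3 matrix M = [[B⁻¹(a₋ - s), -B⁻¹ s q, -q B⁻¹ D], [0, 0, 1], [0, k D⁻¹ φ₋, -s D⁻¹]] has exactly two eigenvalues with positive real part and one eigenvalue with negative real part; moreover all three eigenvalues are real. -/
open Polynomial

/-- the linearization of the traveling-wave ODE at the burned state of a
strong detonation has two real positive eigenvalues and one real negative eigenvalue. -/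
theorem stmt3 (am s q B D k phim : ℝ) (hB : 0 < B) (hD : 0 < D) (hk : 0 < k)
    (hs : 0 < s) (hφ : 0 < phim) (ha : s < am) :
    ∃ μ₁ μ₂ μ₃ : ℝ, 0 < μ₁ ∧ 0 < μ₂ ∧ μ₃ < 0 ∧
      Matrix.charpoly
        (!![B⁻¹ * (am - s), -(B⁻¹ * s * q), -(q * B⁻¹ * D);
            0, 0, 1;
            0, k * D⁻¹ * phim, -(s * D⁻¹)])
        = (X - C μ₁) * (X - C μ₂) * (X - C μ₃) := by
  set δ : ℝ := Real.sqrt ((s * D⁻¹) ^ 2 + 4 * (k * D⁻¹ * phim)) with hδdef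
  have hpos : (0:ℝ) < (s * D⁻¹) ^ 2 + 4 * (k * D⁻¹ * phim) := by positivity
  have hδ2 : δ ^ 2 = (s * D⁻¹) ^ 2 + 4 * (k * D⁻¹ * phim) :=
    Real.sq_sqrt hpos.le
  have hδnn : 0 ≤ δ := Real.sqrt_nonneg _
  have hsD : 0 < s * D⁻¹ := by positivity
  have hδgt : s * D⁻¹ < δ := by
    calc s * D⁻¹ = Real.sqrt ((s * D⁻¹) ^ 2) := (Real.sqrt_sq hsD.le).symm
      _ < δ := Real.sqrt_lt_sqrt (sq_nonneg _)
          (by nlinarith [mul_pos (mul_pos hk (inv_pos.2 hD)) hφ])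
  refine ⟨B⁻¹ * (am - s), (δ - s * D⁻¹) / 2, (-(s * D⁻¹) - δ) / 2, ?_, ?_, ?_, ?_⟩
  · have : 0 < am - s := by linarith
    positivity
  · linarith
  · linarith
  · have hmain : Matrix.charpoly
        (!![B⁻¹ * (am - s), -(B⁻¹ * s * q), -(q * B⁻¹ * D);
            0, 0, 1;
            0, k * D⁻¹ * phim, -(s * D⁻¹)])
        = (X - C (B⁻¹ * (am - s))) * (X * X + C (s * D⁻¹) * X - C (k * D⁻¹ * phim)) := by
      rw [Matrix.charpoly, Matrix.det_fin_three]
      simp [Matrix.charmatrix_apply, Matrix.smul_apply, Matrix.one_apply,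
        Matrix.vecHead, Matrix.vecTail]
      ring
    rw [hmain]
    have h1 : (δ - s * D⁻¹) / 2 + (-(s * D⁻¹) - δ) / 2 = -(s * D⁻¹) := by ring
    have h2 : (δ - s * D⁻¹) / 2 * ((-(s * D⁻¹) - δ) / 2) = -(k * D⁻¹ * phim) := by
      nlinarith [hδ2]
    have expand : (X - C ((δ - s * D⁻¹) / 2)) * (X - C ((-(s * D⁻¹) - δ) / 2))
        = X * X - C ((δ - s * D⁻¹) / 2 + (-(s * D⁻¹) - δ) / 2) * X
          + C ((δ - s * D⁻¹) / 2 * ((-(s * D⁻¹) - δ) / 2)) := by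
      rw [C_add, C_mul]; ring
    rw [show (X - C (B⁻¹ * (am - s))) * (X - C ((δ - s * D⁻¹) / 2)) * (X - C ((-(s * D⁻¹) - δ) / 2))
        = (X - C (B⁻¹ * (am - s))) * ((X - C ((δ - s * D⁻¹) / 2)) * (X - C ((-(s * D⁻¹) - δ) / 2)))
        from mul_assoc _ _ _, expand, h1, h2, C_neg, C_neg]
    ring
end

section
/- Let s, D, k > 0 and μ₊ = (-s + √(s² + 4Dk))/(2D), s̃ = s/D, d₀ = 1/(1+μ₊/s̃), c₀ = μ₊ d₀. Define z : ℝ → ℝ by z(x) = d₀ e^{μ₊ x} for x ≤ 0 and z(x) = 1 - (c₀/s̃) e^{-s̃ x} for x ≥ 0. Then z is continuously differentiable on ℝ, z(x) → 0 as x → -∞, z(x) → 1 as x → +∞, and 0 < z(x) < 1 for all x. -/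
open Filter

/-- the explicit zero-activation-energy reactant profile is C¹, tends to
0 at -∞ and 1 at +∞, and takes values strictly between 0 and 1. -/
theorem stmt8 (s D k : ℝ) (hs : 0 < s) (hD : 0 < D) (hk : 0 < k) :
    let μp := (-s + Real.sqrt (s ^ 2 + 4 * D * k)) / (2 * D)
    let st := s / D
    let d₀ := 1 / (1 + μp / st)
    let c₀ := μp * d₀
    let z : ℝ → ℝ := fun x =>
      if x ≤ 0 then d₀ * Real.exp (μp * x) else 1 - (c₀ / st) * Real.exp (-st * x)
    ContDiff ℝ 1 z ∧
      Tendsto z atBot (nhds 0) ∧ Tendsto z atTop (nhds 1) ∧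
      ∀ x, 0 < z x ∧ z x < 1 := by
  intro μp st d₀ c₀ z
  have hst : 0 < st := div_pos hs hD
  have hstne : st ≠ 0 := ne_of_gt hst
  have hsqrt : s < Real.sqrt (s ^ 2 + 4 * D * k) := by
    have h2 : s = Real.sqrt (s ^ 2) := by rw [Real.sqrt_sq hs.le]
    rw [h2]
    exact Real.sqrt_lt_sqrt (by positivity) (by nlinarith)
  have hμ : 0 < μp := by
    have : 0 < -s + Real.sqrt (s ^ 2 + 4 * D * k) := by linarith
    exact div_pos this (by linarith)
  have hden : 0 < 1 + μp / st := by positivity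
  have hd0pos : 0 < d₀ := by
    show (0:ℝ) < 1 / (1 + μp / st); positivity
  have hd0lt : d₀ < 1 := by
    show (1:ℝ) / (1 + μp / st) < 1
    rw [div_lt_one hden]
    have := div_pos hμ hst
    linarith
  have hc0 : 0 < c₀ := mul_pos hμ hd0pos
  have hc : c₀ = μp * d₀ := rfl
  have hkey : d₀ = 1 - c₀ / st := by
    show (1:ℝ) / (1 + μp / st) = 1 - μp * (1 / (1 + μp / st)) / st
    field_simp
    ring
  have hcst : c₀ / st < 1 := by
    have := hd0pos
    rw [hkey] at this; linarith
  have hcstpos : 0 < c₀ / st := div_pos hc0 hst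
  have hsimp : ∀ e : ℝ, -((c₀ / st) * (e * -st)) = c₀ * e := by
    intro e
    simp only [mul_neg, neg_neg]
    rw [mul_comm e st, ← mul_assoc, div_mul_cancel₀ c₀ hstne]
  -- the two smooth pieces
  have hL : ∀ x : ℝ, HasDerivAt (fun y => d₀ * Real.exp (μp * y))
      (d₀ * (Real.exp (μp * x) * μp)) x := by
    intro x
    have := (((hasDerivAt_id x).const_mul μp).exp).const_mul d₀
    simpa using this
  have hR : ∀ x : ℝ, HasDerivAt (fun y => 1 - (c₀ / st) * Real.exp (-st * y))
      (-((c₀ / st) * (Real.exp (-st * x) * -st))) x := by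
    intro x
    have := ((((hasDerivAt_id x).const_mul (-st)).exp).const_mul (c₀ / st)).const_sub 1
    simpa using this
  set g : ℝ → ℝ := fun x => c₀ * Real.exp (min (μp * x) (-st * x)) with hg
  have hgz : ∀ x, HasDerivAt z (g x) x := by
    intro x
    rcases lt_trichotomy x 0 with hx | hx | hx
    · have heq : z =ᶠ[nhds x] fun y => d₀ * Real.exp (μp * y) := by
        filter_upwards [Iio_mem_nhds hx] with y hy
        simp [z, le_of_lt (Set.mem_Iio.mp hy)]
      have hd : HasDerivAt z (d₀ * (Real.exp (μp * x) * μp)) x :=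
        (hL x).congr_of_eventuallyEq heq
      convert hd using 1
      have hmin : min (μp * x) (-st * x) = μp * x := by
        apply min_eq_left; nlinarith
      show c₀ * Real.exp (min (μp * x) (-st * x)) = d₀ * (Real.exp (μp * x) * μp)
      rw [hmin, hc]; ring
    · subst hx
      have hleft : HasDerivWithinAt z (d₀ * (Real.exp (μp * 0) * μp)) (Set.Iic 0) 0 := by
        apply ((hL 0).hasDerivWithinAt).congr
        · intro y hy; simp [z, (Set.mem_Iic.mp hy)]
        · simp [z]
      have hright : HasDerivWithinAt z (-((c₀ / st) * (Real.exp (-st * 0) * -st)))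
          (Set.Ici 0) 0 := by
        apply ((hR 0).hasDerivWithinAt).congr
        · intro y hy
          rcases eq_or_lt_of_le (Set.mem_Ici.mp hy) with h | h
          · simp [z, ← h, hkey]
          · simp [z, not_le.mpr h]
        · simp [z, hkey]
      have hderiv_eq : -((c₀ / st) * (Real.exp (-st * 0) * -st)) =
          d₀ * (Real.exp (μp * 0) * μp) := by
        rw [hsimp]
        simp only [mul_zero, neg_zero, Real.exp_zero]
        rw [hc]; ring
      have hunion := hleft.union (hderiv_eq ▸ hright)
      rw [Set.Iic_union_Ici] at hunion
      have hd : HasDerivAt z (d₀ * (Real.exp (μp * 0) * μp)) 0 :=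
        hunion.hasDerivAt Filter.univ_mem
      convert hd using 1
      show c₀ * Real.exp (min (μp * 0) (-st * 0)) = d₀ * (Real.exp (μp * 0) * μp)
      simp only [mul_zero, min_self, Real.exp_zero]
      rw [hc]; ring
    · have heq : z =ᶠ[nhds x] fun y => 1 - (c₀ / st) * Real.exp (-st * y) := by
        filter_upwards [Ioi_mem_nhds hx] with y hy
        simp [z, not_le.mpr (Set.mem_Ioi.mp hy)]
      have hd : HasDerivAt z (-((c₀ / st) * (Real.exp (-st * x) * -st))) x :=
        (hR x).congr_of_eventuallyEq heq
      convert hd using 1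
      have hmin : min (μp * x) (-st * x) = -st * x := by
        apply min_eq_right; nlinarith
      show c₀ * Real.exp (min (μp * x) (-st * x)) = -((c₀ / st) * (Real.exp (-st * x) * -st))
      rw [hmin, hsimp]
  have hdiff : Differentiable ℝ z := fun x => (hgz x).differentiableAt
  have hderiv : deriv z = g := funext fun x => (hgz x).deriv
  have hgcont : Continuous g := by
    apply continuous_const.mul
    exact (Real.continuous_exp.comp ((continuous_const.mul continuous_id).min
      (continuous_const.mul continuous_id)))
  refine ⟨?_, ?_, ?_, ?_⟩
  · rw [contDiff_one_iff_deriv]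
    exact ⟨hdiff, hderiv ▸ hgcont⟩
  · have htend : Tendsto (fun x => d₀ * Real.exp (μp * x)) atBot (nhds 0) := by
      have h1 : Tendsto (fun x : ℝ => μp * x) atBot atBot :=
        tendsto_id.const_mul_atBot hμ
      have h2 := Real.tendsto_exp_atBot.comp h1
      have h3 := h2.const_mul d₀
      simpa using h3
    apply htend.congr'
    filter_upwards [eventually_le_atBot (0:ℝ)] with x hx
    simp [z, hx]
  · have htend : Tendsto (fun x => 1 - (c₀ / st) * Real.exp (-st * x)) atTop (nhds 1) := by
      have h1 : Tendsto (fun x : ℝ => -st * x) atTop atBot := by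
        have h0 : Tendsto (fun x : ℝ => st * x) atTop atTop :=
          tendsto_id.const_mul_atTop hst
        have h0' := tendsto_neg_atTop_atBot.comp h0
        simpa [Function.comp_def, neg_mul] using h0'
      have h2 := Real.tendsto_exp_atBot.comp h1
      have h3 := (h2.const_mul (c₀ / st)).const_sub 1
      simpa using h3
    apply htend.congr'
    filter_upwards [eventually_gt_atTop (0:ℝ)] with x hx
    simp [z, not_le.mpr hx]
  · intro x
    by_cases hx : x ≤ 0
    · simp only [z, if_pos hx]
      constructor
      · positivity
      · have h1 : Real.exp (μp * x) ≤ 1 :=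
          Real.exp_le_one_iff.mpr (mul_nonpos_of_nonneg_of_nonpos hμ.le hx)
        nlinarith
    · push_neg at hx
      simp only [z, if_neg (not_le.mpr hx)]
      have h1 : Real.exp (-st * x) < 1 := by
        apply Real.exp_lt_one_iff.mpr; nlinarith
      have h2 : 0 < Real.exp (-st * x) := Real.exp_pos _
      constructor
      · nlinarith
      · nlinarith
end
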